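/- arXiv:1510.06796 — 3 statements merged into one kernel-verified Lean document; each statement's English description precedes it below -/
import Mathlib

section
/- Let r_K > 0, τ > 0, γ₀ ∈ (0,1), K_max > 0. The periodic equilibrium K_per(t) = (1 − γ₀·e^{−r_K(t − nτ)}/(1 − (1 − γ₀)·e^{−r_K·τ}))·K_max for t ∈ [nτ,(n+1)τ) satisfies the bounds ((1 − γ₀)(1 − e^{−r_Kτ})/(1 − (1 − γ₀)e^{−r_Kτ}))·K_max ≤ K_per(t) ≤ ((1 − e^{−r_Kτ})/(1 − (1 − γ₀)e^{−r_Kτ}))·K_max for all t ≥ 0. -/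
/-- Bounds on the periodic equilibrium `K_per`:
`((1-γ₀)(1-e^{-r_Kτ})/(1-(1-γ₀)e^{-r_Kτ})) K_max ≤ K_per(t) ≤
((1-e^{-r_Kτ})/(1-(1-γ₀)e^{-r_Kτ})) K_max` for all `t ≥ 0`. -/
theorem periodic_equilibrium_bounds
    (rK τ γ0 Kmax : ℝ)
    (hrK : 0 < rK) (hτ : 0 < τ) (hγ0 : 0 < γ0) (hγ1 : γ0 < 1) (hK : 0 < Kmax) :
    let Kper : ℝ → ℝ := fun t =>
      (1 - γ0 * Real.exp (-rK * (t - (⌊t / τ⌋ : ℝ) * τ)) /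
        (1 - (1 - γ0) * Real.exp (-rK * τ))) * Kmax
    ∀ t : ℝ, 0 ≤ t →
      ((1 - γ0) * (1 - Real.exp (-rK * τ)) / (1 - (1 - γ0) * Real.exp (-rK * τ))) * Kmax
        ≤ Kper t ∧
      Kper t ≤ ((1 - Real.exp (-rK * τ)) / (1 - (1 - γ0) * Real.exp (-rK * τ))) * Kmax := by
  intro Kper t ht
  set s : ℝ := t - (⌊t / τ⌋ : ℝ) * τ with hs
  have hs0 : 0 ≤ s := Int.sub_floor_div_mul_nonneg t hτ
  have hsτ : s < τ := Int.sub_floor_div_mul_lt t hτ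
  set E : ℝ := Real.exp (-rK * τ) with hEdef
  set F : ℝ := Real.exp (-rK * s) with hFdef
  have hE0 : 0 < E := Real.exp_pos _
  have hE1 : E < 1 := by
    rw [hEdef, Real.exp_lt_one_iff]
    nlinarith
  have hF1 : F ≤ 1 := by
    rw [hFdef, Real.exp_le_one_iff]
    nlinarith
  have hEF : E ≤ F := by
    rw [hEdef, hFdef, Real.exp_le_exp]
    nlinarith
  have hD : 0 < 1 - (1 - γ0) * E := by nlinarith
  have hrw : 1 - γ0 * F / (1 - (1 - γ0) * E)
      = ((1 - (1 - γ0) * E) - γ0 * F) / (1 - (1 - γ0) * E) := by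
    field_simp
  constructor
  · have h1 : (1 - γ0) * (1 - E) / (1 - (1 - γ0) * E)
        ≤ 1 - γ0 * F / (1 - (1 - γ0) * E) := by
      rw [hrw, div_le_div_iff_of_pos_right hD]
      nlinarith
    exact mul_le_mul_of_nonneg_right h1 hK.le
  · have h2 : 1 - γ0 * F / (1 - (1 - γ0) * E)
        ≤ (1 - E) / (1 - (1 - γ0) * E) := by
      rw [hrw, div_le_div_iff_of_pos_right hD]
      nlinarith
    exact mul_le_mul_of_nonneg_right h2 hK.le
end

section
/- Let r_K > 0. If K₁ and K₂ are two solutions of dK/dt = r_K·(K_max − K) subject to the same impulses ΔK(nτ) = −γ₀·K(nτ) (i.e., both are multiplied by (1 − γ₀) at times nτ), then y = K₁ − K₂ satisfies |y(t)| ≤ |y(0)|·e^{−r_K·t}·(1 − γ₀)^{⌊t/τ⌋} for all t ≥ 0; in particular y(t) → 0 as t → ∞. Hence K_per attracts all solutions. -/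
open Filter Set Topology Real

/-! Between two impulses the difference `y = K₁ - K₂` solves the linear equation `y' = -r_K y`,
so `y(t) e^{r_K t}` is constant there, and each impulse multiplies `y` by `1 - γ₀`. Induction over
the impulse times gives the exact formula `y(t) = y(0) e^{-r_K t} (1 - γ₀)^⌊t/τ⌋` for `t ≥ 0`,
from which the bound and the decay to `0` follow. -/

section LinearDecay

variable {y : ℝ → ℝ} {r a b : ℝ}

theorem eq_of_hasDerivAt_zero_of_continuousOn_Icc (hab : a ≤ b) (hcont : ContinuousOn y (Icc a b))
    (hderiv : ∀ t ∈ Ioo a b, HasDerivAt y 0 t) : y b = y a := by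
  rcases hab.eq_or_lt with rfl | hab
  · rfl
  obtain ⟨c, -, hc⟩ := exists_hasDerivAt_eq_slope y (fun _ => 0) hab hcont hderiv
  rw [eq_comm, div_eq_zero_iff, sub_eq_zero] at hc
  exact hc.resolve_right (sub_ne_zero.2 hab.ne')

theorem eq_mul_exp_of_hasDerivAt_neg_mul (hab : a ≤ b) (hcont : ContinuousOn y (Icc a b))
    (hderiv : ∀ t ∈ Ioo a b, HasDerivAt y (-r * y t) t) :
    y b = y a * exp (-r * (b - a)) := by
  have hexp (t : ℝ) : HasDerivAt (fun s => exp (r * s)) (exp (r * t) * r) t :=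
    ((hasDerivAt_id t).const_mul r).exp.congr_deriv (by simp)
  have hconst : y b * exp (r * b) = y a * exp (r * a) :=
    eq_of_hasDerivAt_zero_of_continuousOn_Icc (y := fun t => y t * exp (r * t)) hab
      (hcont.mul (by fun_prop)) fun t ht => ((hderiv t ht).mul (hexp t)).congr_deriv (by ring)
  rw [show -r * (b - a) = r * a - r * b by ring, exp_sub, ← mul_div_assoc, ← hconst,
    mul_div_cancel_right₀ _ (exp_ne_zero _)]

theorem eq_mul_exp_of_mem_Ico (hcont : ContinuousOn y (Ico a b))
    (hderiv : ∀ t ∈ Ioo a b, HasDerivAt y (-r * y t) t) {t : ℝ} (ht : t ∈ Ico a b) :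
    y t = y a * exp (-r * (t - a)) :=
  eq_mul_exp_of_hasDerivAt_neg_mul ht.1 (hcont.mono fun _ hs => ⟨hs.1, hs.2.trans_lt ht.2⟩)
    fun _ hs => hderiv _ ⟨hs.1, hs.2.trans ht.2⟩

theorem tendsto_nhdsLT_mul_exp (hab : a < b) (hcont : ContinuousOn y (Ico a b))
    (hderiv : ∀ t ∈ Ioo a b, HasDerivAt y (-r * y t) t) :
    Tendsto y (𝓝[<] b) (𝓝 (y a * exp (-r * (b - a)))) := by
  have hlim : Tendsto (fun t => y a * exp (-r * (t - a))) (𝓝[<] b) (𝓝 (y a * exp (-r * (b - a)))) :=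
    ((by fun_prop : Continuous fun t => y a * exp (-r * (t - a))).tendsto b).mono_left
      nhdsWithin_le_nhds
  refine hlim.congr' ?_
  filter_upwards [Ioo_mem_nhdsLT hab] with t ht
  exact (eq_mul_exp_of_mem_Ico hcont hderiv (Ioo_subset_Ico_self ht)).symm

end LinearDecay

theorem mem_Ico_floor_div_mul {t τ : ℝ} (ht : 0 ≤ t) (hτ : 0 < τ) :
    t ∈ Ico (⌊t / τ⌋₊ * τ) ((⌊t / τ⌋₊ + 1) * τ) :=
  ⟨(le_div_iff₀ hτ).1 (Nat.floor_le (div_nonneg ht hτ.le)),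
    (div_lt_iff₀ hτ).1 (Nat.lt_floor_add_one _)⟩

section Impulsive

variable {y : ℝ → ℝ} {r τ c : ℝ}

theorem eq_mul_exp_mul_pow_of_impulsive (hτ : 0 < τ)
    (hderiv : ∀ n : ℕ, ∀ t ∈ Ioo (n * τ) ((n + 1) * τ), HasDerivAt y (-r * y t) t)
    (hcont : ∀ n : ℕ, ContinuousOn y (Ico (n * τ) ((n + 1) * τ)))
    (hjump : ∀ n : ℕ, ∃ l, Tendsto y (𝓝[<] ((n + 1) * τ)) (𝓝 l) ∧ y ((n + 1) * τ) = c * l)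
    {t : ℝ} (ht : 0 ≤ t) :
    y t = y 0 * exp (-r * t) * c ^ ⌊t / τ⌋₊ := by
  have hgrid (n : ℕ) : y (n * τ) = y 0 * exp (-r * (n * τ)) * c ^ n := by
    induction n with
    | zero => simp
    | succ n ih =>
      obtain ⟨l, hl, hyl⟩ := hjump n
      have hleft := tendsto_nhdsLT_mul_exp (by linarith) (hcont n) (hderiv n)
      rw [tendsto_nhds_unique hl hleft, ih] at hyl
      push_cast
      rw [hyl, pow_succ,
        show -r * ((n + 1) * τ) = -r * (n * τ) + -r * ((n + 1) * τ - n * τ) by ring, exp_add]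
      ring
  set n := ⌊t / τ⌋₊
  rw [eq_mul_exp_of_mem_Ico (hcont n) (hderiv n) (mem_Ico_floor_div_mul ht hτ), hgrid,
    show -r * t = -r * (n * τ) + -r * (t - n * τ) by ring, exp_add]
  ring

end Impulsive

theorem impulsive_solutions_contract_general
    (rK τ γ0 Kmax : ℝ)
    (hrK : 0 < rK) (hτ : 0 < τ) (hγ0 : 0 < γ0) (hγ1 : γ0 < 1)
    (K₁ K₂ : ℝ → ℝ)
    (hode : ∀ K ∈ ({K₁, K₂} : Set (ℝ → ℝ)),
      (∀ n : ℕ, ∀ t ∈ Ioo ((n : ℝ) * τ) (((n : ℝ) + 1) * τ),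
          HasDerivAt K (rK * (Kmax - K t)) t) ∧
      (∀ n : ℕ, ContinuousOn K (Ico ((n : ℝ) * τ) (((n : ℝ) + 1) * τ))) ∧
      (∀ n : ℕ, 1 ≤ n → ∃ l : ℝ,
          Tendsto K (nhdsWithin ((n : ℝ) * τ) (Iio ((n : ℝ) * τ))) (nhds l) ∧
          K ((n : ℝ) * τ) = (1 - γ0) * l)) :
    (∀ t : ℝ, 0 ≤ t →
        |K₁ t - K₂ t| ≤ |K₁ 0 - K₂ 0| * Real.exp (-rK * t) * (1 - γ0) ^ (⌊t / τ⌋.toNat)) ∧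
    Tendsto (fun t => K₁ t - K₂ t) atTop (nhds 0) := by
  obtain ⟨hd₁, hc₁, hl₁⟩ := hode K₁ (by simp)
  obtain ⟨hd₂, hc₂, hl₂⟩ := hode K₂ (by simp)
  have hformula (t : ℝ) (ht : 0 ≤ t) :
      K₁ t - K₂ t = (K₁ 0 - K₂ 0) * exp (-rK * t) * (1 - γ0) ^ ⌊t / τ⌋₊ :=
    eq_mul_exp_mul_pow_of_impulsive (y := K₁ - K₂) hτ
      (fun n t ht =>
        ((hd₁ n t ht).sub (hd₂ n t ht)).congr_deriv (by simp only [Pi.sub_apply]; ring))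
      (fun n => (hc₁ n).sub (hc₂ n))
      (fun n => by
        obtain ⟨l₁, hl₁, hK₁⟩ := hl₁ (n + 1) (Nat.le_add_left 1 n)
        obtain ⟨l₂, hl₂, hK₂⟩ := hl₂ (n + 1) (Nat.le_add_left 1 n)
        push_cast at hl₁ hl₂ hK₁ hK₂
        exact ⟨l₁ - l₂, hl₁.sub hl₂, by simp only [Pi.sub_apply, hK₁, hK₂]; ring⟩) ht
  have hbound (t : ℝ) (ht : 0 ≤ t) :
      |K₁ t - K₂ t| = |K₁ 0 - K₂ 0| * exp (-rK * t) * (1 - γ0) ^ ⌊t / τ⌋₊ := by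
    rw [hformula t ht, abs_mul, abs_mul, abs_exp, abs_pow, abs_of_pos (sub_pos.2 hγ1)]
  refine ⟨fun t ht => by rw [Int.floor_toNat, hbound t ht], ?_⟩
  have hdecay : Tendsto (fun t => |K₁ 0 - K₂ 0| * exp (-rK * t)) atTop (𝓝 0) := by
    simpa using (tendsto_exp_atBot.comp
      (tendsto_id.const_mul_atTop_of_neg (neg_lt_zero.2 hrK))).const_mul |K₁ 0 - K₂ 0|
  refine squeeze_zero_norm' ?_ hdecay
  filter_upwards [eventually_ge_atTop 0] with t ht
  rw [norm_eq_abs, hbound t ht]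
  exact mul_le_of_le_one_right (by positivity) (pow_le_one₀ (by linarith) (by linarith))

/-- Contraction between two solutions of the impulsive equation
`dK/dt = r_K(K_max - K)`, `ΔK(nτ) = -γ₀ K(nτ)`: the difference `y = K₁ - K₂` satisfies
`|y(t)| ≤ |y(0)| e^{-r_K t} (1-γ₀)^⌊t/τ⌋` for `t ≥ 0`, and tends to `0`;
hence the periodic equilibrium attracts all solutions. -/
theorem impulsive_solutions_contract
    (rK τ γ0 Kmax : ℝ)
    (hrK : 0 < rK) (hτ : 0 < τ) (hγ0 : 0 < γ0) (hγ1 : γ0 < 1) (hK : 0 < Kmax)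
    (K₁ K₂ : ℝ → ℝ)
    (hode : ∀ K ∈ ({K₁, K₂} : Set (ℝ → ℝ)),
      (∀ n : ℕ, ∀ t ∈ Ioo ((n : ℝ) * τ) (((n : ℝ) + 1) * τ),
          HasDerivAt K (rK * (Kmax - K t)) t) ∧
      (∀ n : ℕ, ContinuousOn K (Ico ((n : ℝ) * τ) (((n : ℝ) + 1) * τ))) ∧
      (∀ n : ℕ, 1 ≤ n → ∃ l : ℝ,
          Tendsto K (nhdsWithin ((n : ℝ) * τ) (Iio ((n : ℝ) * τ))) (nhds l) ∧
          K ((n : ℝ) * τ) = (1 - γ0) * l)) :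
    (∀ t : ℝ, 0 ≤ t →
        |K₁ t - K₂ t| ≤ |K₁ 0 - K₂ 0| * Real.exp (-rK * t) * (1 - γ0) ^ (⌊t / τ⌋.toNat)) ∧
    Tendsto (fun t => K₁ t - K₂ t) atTop (nhds 0) :=
  impulsive_solutions_contract_general rK τ γ0 Kmax hrK hτ hγ0 hγ1 K₁ K₂ hode
end

section
/- Let C = r_K·γ₀/(1 − e^{−r_K·τ}) with r_K, τ > 0, γ₀ ∈ (0,1), and N = ν_L·r·b/((ν_L + μ_L)·μ_v). If N ≤ (1 + (μ_v/ν_L)·e^{−r_Kτ}·C)·(1 + e^{−r_Kτ}·C/(ν_L + μ_L)), then the matrix −A_up = [[ν_L + μ_L + C·e^{−r_Kτ}, −r·b·ν_L/μ_v], [−ν_L, ν_L·(1 + (μ_v/ν_L)·C·e^{−r_Kτ})]] has all principal minors nonnegative (both diagonal entries positive and determinant ≥ 0). -/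
/-! The determinant of `-A_up` is `(ν_L + μ_L) ν_L` times the gap between the threshold and `N`,
so the hypothesis is exactly its nonnegativity; the diagonal entries are positive since
`e^{-r_K τ} < 1` makes `C` positive. -/

theorem div_one_sub_exp_neg_mul_pos {k τ γ : ℝ} (hk : 0 < k) (hτ : 0 < τ) (hγ : 0 < γ) :
    0 < k * γ / (1 - Real.exp (-k * τ)) := by
  have hexp : Real.exp (-k * τ) < 1 := Real.exp_lt_one_iff.2 (by nlinarith)
  exact div_pos (mul_pos hk hγ) (sub_pos.2 hexp)

theorem det_eq_mul_threshold_sub_reproduction_number {r b ν μ μv C E : ℝ}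
    (hν : ν ≠ 0) (hνμ : ν + μ ≠ 0) :
    (ν + μ + C * E) * (ν * (1 + μv / ν * C * E)) - (-(r * b * ν / μv)) * (-ν) =
      (ν + μ) * ν *
        ((1 + μv / ν * E * C) * (1 + E * C / (ν + μ)) - ν * r * b / ((ν + μ) * μv)) := by
  field_simp

theorem extinction_condition_minors_nonneg_general
    (r b νL μL μv rK τ γ0 : ℝ)
    (hνL : 0 < νL) (hμL : 0 < μL) (hμv : 0 < μv)
    (hrK : 0 < rK) (hτ : 0 < τ) (hγ0 : 0 < γ0) :
    let C : ℝ := rK * γ0 / (1 - Real.exp (-rK * τ))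
    let N : ℝ := νL * r * b / ((νL + μL) * μv)
    N ≤ (1 + (μv / νL) * Real.exp (-rK * τ) * C) *
        (1 + Real.exp (-rK * τ) * C / (νL + μL)) →
    0 < νL + μL + C * Real.exp (-rK * τ) ∧
    0 < νL * (1 + (μv / νL) * C * Real.exp (-rK * τ)) ∧
    0 ≤ (νL + μL + C * Real.exp (-rK * τ)) *
          (νL * (1 + (μv / νL) * C * Real.exp (-rK * τ)))
        - (-(r * b * νL / μv)) * (-νL) := by
  intro C N hN
  have hC : 0 < C := div_one_sub_exp_neg_mul_pos hrK hτ hγ0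
  refine ⟨by positivity, by positivity, ?_⟩
  rw [det_eq_mul_threshold_sub_reproduction_number hνL.ne' (by positivity)]
  exact mul_nonneg (by positivity) (sub_nonneg.2 hN)

/-- Extinction condition: if
`N ≤ (1 + (μ_v/ν_L) e^{-r_K τ} C)(1 + e^{-r_K τ} C/(ν_L+μ_L))` with
`C = r_K γ₀/(1-e^{-r_K τ})`, then all principal minors of `-A_up` are nonnegative:
both diagonal entries are positive and the determinant is nonnegative, where
`-A_up = [[ν_L+μ_L+C e^{-r_Kτ}, -r b ν_L/μ_v], [-ν_L, ν_L(1+(μ_v/ν_L) C e^{-r_Kτ})]]`. -/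
theorem extinction_condition_minors_nonneg
    (r b νL μL μv rK τ γ0 : ℝ)
    (hr : 0 < r) (hb : 0 < b) (hνL : 0 < νL) (hμL : 0 < μL) (hμv : 0 < μv)
    (hrK : 0 < rK) (hτ : 0 < τ) (hγ0 : 0 < γ0) (hγ1 : γ0 < 1) :
    let C : ℝ := rK * γ0 / (1 - Real.exp (-rK * τ))
    let N : ℝ := νL * r * b / ((νL + μL) * μv)
    N ≤ (1 + (μv / νL) * Real.exp (-rK * τ) * C) *
        (1 + Real.exp (-rK * τ) * C / (νL + μL)) →
    0 < νL + μL + C * Real.exp (-rK * τ) ∧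
    0 < νL * (1 + (μv / νL) * C * Real.exp (-rK * τ)) ∧
    0 ≤ (νL + μL + C * Real.exp (-rK * τ)) *
          (νL * (1 + (μv / νL) * C * Real.exp (-rK * τ)))
        - (-(r * b * νL / μv)) * (-νL) :=
  extinction_condition_minors_nonneg_general r b νL μL μv rK τ γ0 hνL hμL hμv hrK hτ hγ0
end
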